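/- For every n ∈ ℕ with n ≥ 1, every (a_j)_{1≤j≤n} ∈ ℂ^n and every (γ_{j,k})_{1≤j<k≤n} ∈ ℝ^{n(n−1)/2}: inf over v ∈ ℂ^{2^n} with ‖v‖ = 1 of ‖M_n((a_j)_{1≤j≤n},(γ_{j,k})_{1≤j<k≤n})·v‖² is at least (1 − [n ≥ 2]·(1/2)·max_{m∈{1,…,n}}(Σ_{j=1}^{m−1}|1 + e^{iγ_{j,m}}| + Σ_{j=m+1}^{n}|1 + e^{iγ_{m,j}}|)) · Σ_{j=1}^{n}|a_j|², where [n ≥ 2] is 1 if n ≥ 2 and 0 otherwise. -/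

import Mathlib

open Matrix

noncomputable def Umat : (n : ℕ) → (Fin n → ℝ) → Matrix (Fin (2 ^ n)) (Fin (2 ^ n)) ℂ
  | 0, _ => 1
  | n + 1, ξ =>
      (Matrix.reindex (finSumFinEquiv.trans (finCongr (by rw [pow_succ, mul_two])))
        (finSumFinEquiv.trans (finCongr (by rw [pow_succ, mul_two]))))
        (Matrix.fromBlocks (Umat n fun j => ξ j.castSucc) 0 0
          (Complex.exp (Complex.I * (ξ (Fin.last n) : ℂ)) • Umat n fun j => ξ j.castSucc))

/-- The recursively defined hopping matrix `M_n((a_j), (γ_{j,k}))`; only the entries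
`γ j k` with `j < k` are relevant. -/
noncomputable def Mmat : (n : ℕ) → (Fin n → ℂ) → (Fin n → Fin n → ℝ) →
    Matrix (Fin (2 ^ n)) (Fin (2 ^ n)) ℂ
  | 0, _, _ => 0
  | n + 1, a, γ =>
      (Matrix.reindex (finSumFinEquiv.trans (finCongr (by rw [pow_succ, mul_two])))
        (finSumFinEquiv.trans (finCongr (by rw [pow_succ, mul_two]))))
        (Matrix.fromBlocks
          (Mmat n (fun j => a j.castSucc) fun j k => γ j.castSucc k.castSucc)
          (a (Fin.last n) • Umat n fun j => γ j.castSucc (Fin.last n))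
          ((starRingEnd ℂ) (a (Fin.last n)) • (Umat n fun j => γ j.castSucc (Fin.last n))ᴴ)
          (Mmat n (fun j => a j.castSucc) fun j k => γ j.castSucc k.castSucc))

/-!
Write `M_{n+1} = [[M, α V], [ᾱ V*, M]]` with `M = M_n`, `V` a diagonal unitary, and split
`v = (x, y)`. As `M` is Hermitian, the cross terms of `‖M_{n+1} v‖²` combine into
`2 Re (α ⟪x, (M V + V M) y⟫)`, and the anticommutator of `M_n` with any `U_n(ξ)` has norm at most
`Σ_j |a_j| |1 + e^{iξ_j}|`: its blocks are again such anticommutators, because diagonal matrices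
commute. Bounding `2 |α| |a_j| ≤ |α|² + |a_j|²` gives, by induction on `n`,
`‖M_n v‖² ≥ (Σ_j |a_j|² - ½ Σ_{j<k} (|a_j|² + |a_k|²) |1 + e^{iγ_{j,k}}|) ‖v‖²`,
and regrouping the double sum by rows bounds it by the largest row sum times `Σ_j |a_j|²`.
-/

section RowSums

variable {ι : Type*} [Fintype ι] [LinearOrder ι]

def rowSum (c : ι → ι → ℝ) (m : ι) : ℝ :=
  (∑ j, if j < m then c j m else 0) + ∑ k, if m < k then c m k else 0

theorem rowSum_eq_zero [Subsingleton ι] (c : ι → ι → ℝ) (m : ι) : rowSum c m = 0 := by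
  simp only [rowSum, Subsingleton.elim _ m, lt_irrefl, if_false, Finset.sum_const_zero, add_zero]

theorem sum_sum_ite_lt_add_mul_eq_sum_mul_rowSum (w : ι → ℝ) (c : ι → ι → ℝ) :
    ∑ j, ∑ k, (if j < k then (w j + w k) * c j k else 0) = ∑ m, w m * rowSum c m := by
  simp only [rowSum, mul_add, Finset.mul_sum, mul_ite, mul_zero, add_mul, ite_add_zero,
    Finset.sum_add_distrib]
  rw [add_comm, Finset.sum_comm (γ := ι) (f := fun m j => if j < m then w m * c j m else 0)]

theorem sum_sum_ite_lt_add_mul_le_iSup_rowSum_mul {w : ι → ℝ} (hw : 0 ≤ w) (c : ι → ι → ℝ) :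
    ∑ j, ∑ k, (if j < k then (w j + w k) * c j k else 0) ≤ (⨆ m, rowSum c m) * ∑ m, w m := by
  rw [sum_sum_ite_lt_add_mul_eq_sum_mul_rowSum, Finset.mul_sum]
  refine Finset.sum_le_sum fun m _ => ?_
  rw [mul_comm]
  exact mul_le_mul_of_nonneg_right (le_ciSup (Finite.bddAbove_range _) m) (hw m)

end RowSums

theorem Fin.sum_sum_ite_lt_castSucc {M : Type*} [AddCommMonoid M] {n : ℕ}
    (g : Fin (n + 1) → Fin (n + 1) → M) :
    ∑ j, ∑ k, (if j < k then g j k else 0) =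
      ∑ j : Fin n, ∑ k : Fin n, (if j < k then g j.castSucc k.castSucc else 0) +
        ∑ j : Fin n, g j.castSucc (Fin.last n) := by
  simp [Fin.sum_univ_castSucc, Fin.castSucc_lt_last, Finset.sum_add_distrib,
    fun i : Fin n => (Fin.castSucc_lt_last i).not_gt]

theorem norm_toEuclideanLin_smul {𝕜 ι : Type*} [RCLike 𝕜] [Fintype ι] [DecidableEq ι] (s : 𝕜)
    (A : Matrix ι ι 𝕜) (x : EuclideanSpace 𝕜 ι) :
    ‖toEuclideanLin (s • A) x‖ = ‖s‖ * ‖toEuclideanLin A x‖ := by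
  rw [map_smul, LinearMap.smul_apply, norm_smul]

theorem norm_toEuclideanLin_diagonal {𝕜 ι : Type*} [RCLike 𝕜] [Fintype ι] [DecidableEq ι]
    {d : ι → 𝕜} (hd : ∀ i, ‖d i‖ = 1) (x : EuclideanSpace 𝕜 ι) :
    ‖toEuclideanLin (diagonal d) x‖ = ‖x‖ := by
  simp [EuclideanSpace.norm_eq, toLpLin_apply, mulVec_diagonal, hd]

theorem fromBlocks_anticommutator {ι R : Type*} [Fintype ι] [CommRing R] {M B C U : Matrix ι ι R}
    (c : R) (hB : Commute U B) (hC : Commute U C) :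
    fromBlocks M B C M * fromBlocks U 0 0 (c • U) + fromBlocks U 0 0 (c • U) * fromBlocks M B C M =
      fromBlocks (M * U + U * M) ((1 + c) • (U * B)) ((1 + c) • (U * C))
        (c • (M * U + U * M)) := by
  simp only [fromBlocks_multiply, fromBlocks_add, mul_zero, zero_mul, add_zero, zero_add,
    mul_smul_comm, smul_mul_assoc, hB.eq, hC.eq]
  congr 1 <;> module

def finTwoPowSuccEquiv (n : ℕ) : Fin (2 ^ n) ⊕ Fin (2 ^ n) ≃ Fin (2 ^ (n + 1)) :=
  finSumFinEquiv.trans (finCongr (by rw [pow_succ, mul_two]))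

section Halves

variable {n : ℕ}

local notation "e" => finTwoPowSuccEquiv n

def upperHalf (v : EuclideanSpace ℂ (Fin (2 ^ (n + 1)))) : EuclideanSpace ℂ (Fin (2 ^ n)) :=
  WithLp.toLp 2 fun i => v (e (.inl i))

def lowerHalf (v : EuclideanSpace ℂ (Fin (2 ^ (n + 1)))) : EuclideanSpace ℂ (Fin (2 ^ n)) :=
  WithLp.toLp 2 fun i => v (e (.inr i))

theorem norm_sq_eq_upperHalf_add_lowerHalf (v : EuclideanSpace ℂ (Fin (2 ^ (n + 1)))) :
    ‖v‖ ^ 2 = ‖upperHalf v‖ ^ 2 + ‖lowerHalf v‖ ^ 2 := by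
  simp only [EuclideanSpace.norm_sq_eq, upperHalf, lowerHalf]
  rw [← (e).sum_comp, Fintype.sum_sum_type]

theorem upperHalf_toEuclideanLin_blocks (A B C D : Matrix (Fin (2 ^ n)) (Fin (2 ^ n)) ℂ)
    (v : EuclideanSpace ℂ (Fin (2 ^ (n + 1)))) :
    upperHalf (toEuclideanLin (reindex e e (fromBlocks A B C D)) v) =
      toEuclideanLin A (upperHalf v) + toEuclideanLin B (lowerHalf v) := by
  ext i
  simp [upperHalf, lowerHalf, toLpLin_apply, submatrix_mulVec_equiv, fromBlocks_mulVec,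
    Function.comp_def]

theorem lowerHalf_toEuclideanLin_blocks (A B C D : Matrix (Fin (2 ^ n)) (Fin (2 ^ n)) ℂ)
    (v : EuclideanSpace ℂ (Fin (2 ^ (n + 1)))) :
    lowerHalf (toEuclideanLin (reindex e e (fromBlocks A B C D)) v) =
      toEuclideanLin C (upperHalf v) + toEuclideanLin D (lowerHalf v) := by
  ext i
  simp [upperHalf, lowerHalf, toLpLin_apply, submatrix_mulVec_equiv, fromBlocks_mulVec,
    Function.comp_def]

theorem norm_toEuclideanLin_blocks_le {A B C D : Matrix (Fin (2 ^ n)) (Fin (2 ^ n)) ℂ}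
    {p q : ℝ} (hp : 0 ≤ p) (hq : 0 ≤ q)
    (hA : ∀ x, ‖toEuclideanLin A x‖ ≤ p * ‖x‖) (hB : ∀ x, ‖toEuclideanLin B x‖ ≤ q * ‖x‖)
    (hC : ∀ x, ‖toEuclideanLin C x‖ ≤ q * ‖x‖) (hD : ∀ x, ‖toEuclideanLin D x‖ ≤ p * ‖x‖)
    (v : EuclideanSpace ℂ (Fin (2 ^ (n + 1)))) :
    ‖toEuclideanLin (reindex e e (fromBlocks A B C D)) v‖ ≤ (p + q) * ‖v‖ := by
  set x := upperHalf v
  set y := lowerHalf v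
  have h₁ : ‖toEuclideanLin A x + toEuclideanLin B y‖ ≤ p * ‖x‖ + q * ‖y‖ :=
    (norm_add_le _ _).trans (add_le_add (hA x) (hB y))
  have h₂ : ‖toEuclideanLin C x + toEuclideanLin D y‖ ≤ q * ‖x‖ + p * ‖y‖ :=
    (norm_add_le _ _).trans (add_le_add (hC x) (hD y))
  refine le_of_pow_le_pow_left₀ two_ne_zero (by positivity) ?_
  rw [norm_sq_eq_upperHalf_add_lowerHalf, upperHalf_toEuclideanLin_blocks,
    lowerHalf_toEuclideanLin_blocks, mul_pow, norm_sq_eq_upperHalf_add_lowerHalf v]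
  nlinarith [pow_le_pow_left₀ (norm_nonneg _) h₁ 2, pow_le_pow_left₀ (norm_nonneg _) h₂ 2,
    mul_nonneg (mul_nonneg hp hq) (sq_nonneg (‖x‖ - ‖y‖))]

theorem norm_sq_toEuclideanLin_blocks_of_isHermitian {M : Matrix (Fin (2 ^ n)) (Fin (2 ^ n)) ℂ}
    (hM : M.IsHermitian) (B : Matrix (Fin (2 ^ n)) (Fin (2 ^ n)) ℂ)
    (v : EuclideanSpace ℂ (Fin (2 ^ (n + 1)))) :
    ‖toEuclideanLin (reindex e e (fromBlocks M B Bᴴ M)) v‖ ^ 2 =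
      ‖toEuclideanLin M (upperHalf v)‖ ^ 2 + ‖toEuclideanLin M (lowerHalf v)‖ ^ 2 +
        ‖toEuclideanLin Bᴴ (upperHalf v)‖ ^ 2 + ‖toEuclideanLin B (lowerHalf v)‖ ^ 2 +
        2 * RCLike.re (inner ℂ (upperHalf v) (toEuclideanLin (M * B + B * M) (lowerHalf v))) := by
  have inner_left : ∀ (A : Matrix (Fin (2 ^ n)) (Fin (2 ^ n)) ℂ) x z,
      inner ℂ (toEuclideanLin A x) z = inner ℂ x (toEuclideanLin Aᴴ z) := fun A x z => by
    rw [toEuclideanLin_conjTranspose_eq_adjoint, LinearMap.adjoint_inner_right]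
  rw [norm_sq_eq_upperHalf_add_lowerHalf, upperHalf_toEuclideanLin_blocks,
    lowerHalf_toEuclideanLin_blocks, norm_add_sq (𝕜 := ℂ), norm_add_sq (𝕜 := ℂ),
    inner_left, inner_left, hM.eq, conjTranspose_conjTranspose, map_add,
    toLpLin_mul_same, toLpLin_mul_same]
  simp only [LinearMap.add_apply, LinearMap.comp_apply, inner_add_right, map_add]
  ring

end Halves

theorem Umat_succ (n : ℕ) (ξ : Fin (n + 1) → ℝ) :
    Umat (n + 1) ξ = reindex (finTwoPowSuccEquiv n) (finTwoPowSuccEquiv n)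
      (fromBlocks (Umat n fun j => ξ j.castSucc) 0 0
        (Complex.exp (Complex.I * (ξ (Fin.last n) : ℂ)) • Umat n fun j => ξ j.castSucc)) :=
  rfl

theorem Mmat_succ (n : ℕ) (a : Fin (n + 1) → ℂ) (γ : Fin (n + 1) → Fin (n + 1) → ℝ) :
    Mmat (n + 1) a γ = reindex (finTwoPowSuccEquiv n) (finTwoPowSuccEquiv n)
      (fromBlocks (Mmat n (fun j => a j.castSucc) fun j k => γ j.castSucc k.castSucc)
        (a (Fin.last n) • Umat n fun j => γ j.castSucc (Fin.last n))
        (a (Fin.last n) • Umat n fun j => γ j.castSucc (Fin.last n))ᴴ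
        (Mmat n (fun j => a j.castSucc) fun j k => γ j.castSucc k.castSucc)) := by
  rw [conjTranspose_smul, Complex.star_def]
  rfl

theorem Umat_eq_diagonal (n : ℕ) (ξ : Fin n → ℝ) :
    ∃ d : Fin (2 ^ n) → ℂ, (∀ i, ‖d i‖ = 1) ∧ Umat n ξ = diagonal d := by
  induction n with
  | zero => exact ⟨1, fun _ => norm_one, diagonal_one.symm⟩
  | succ n ih =>
    obtain ⟨d, hd, hU⟩ := ih fun j => ξ j.castSucc
    refine ⟨Sum.elim d (Complex.exp (Complex.I * ξ (Fin.last n)) • d) ∘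
      (finTwoPowSuccEquiv n).symm, fun i => ?_, ?_⟩
    · rcases h : (finTwoPowSuccEquiv n).symm i with j | j <;>
        simp [h, hd, Complex.norm_exp]
    · rw [Umat_succ, hU, ← diagonal_smul, fromBlocks_diagonal, reindex_apply,
        submatrix_diagonal_equiv]

theorem Umat_commute (n : ℕ) (ξ η : Fin n → ℝ) : Commute (Umat n ξ) (Umat n η) := by
  obtain ⟨d, -, hd⟩ := Umat_eq_diagonal n ξ
  obtain ⟨d', -, hd'⟩ := Umat_eq_diagonal n η
  rw [hd, hd']
  exact commute_diagonal d d'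

theorem Umat_commute_conjTranspose (n : ℕ) (ξ η : Fin n → ℝ) :
    Commute (Umat n ξ) (Umat n η)ᴴ := by
  obtain ⟨d, -, hd⟩ := Umat_eq_diagonal n ξ
  obtain ⟨d', -, hd'⟩ := Umat_eq_diagonal n η
  rw [hd, hd', diagonal_conjTranspose]
  exact commute_diagonal d _

theorem norm_toEuclideanLin_Umat (n : ℕ) (ξ : Fin n → ℝ) (x : EuclideanSpace ℂ (Fin (2 ^ n))) :
    ‖toEuclideanLin (Umat n ξ) x‖ = ‖x‖ := by
  obtain ⟨d, hd, hU⟩ := Umat_eq_diagonal n ξ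
  rw [hU, norm_toEuclideanLin_diagonal hd]

theorem norm_toEuclideanLin_Umat_conjTranspose (n : ℕ) (ξ : Fin n → ℝ)
    (x : EuclideanSpace ℂ (Fin (2 ^ n))) :
    ‖toEuclideanLin (Umat n ξ)ᴴ x‖ = ‖x‖ := by
  obtain ⟨d, hd, hU⟩ := Umat_eq_diagonal n ξ
  rw [hU, diagonal_conjTranspose, norm_toEuclideanLin_diagonal fun i => by simp [hd]]

theorem Mmat_isHermitian (n : ℕ) (a : Fin n → ℂ) (γ : Fin n → Fin n → ℝ) :
    (Mmat n a γ).IsHermitian := by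
  induction n with
  | zero => exact isHermitian_zero
  | succ n ih =>
    rw [Mmat_succ, IsHermitian, reindex_apply, conjTranspose_submatrix,
      fromBlocks_conjTranspose, conjTranspose_conjTranspose, ih]

noncomputable def phaseFactor (θ : ℝ) : ℝ := ‖1 + Complex.exp (Complex.I * θ)‖

theorem phaseFactor_nonneg (θ : ℝ) : 0 ≤ phaseFactor θ := norm_nonneg _

theorem norm_toEuclideanLin_Mmat_anticommutator_Umat_le (n : ℕ) (a : Fin n → ℂ)
    (γ : Fin n → Fin n → ℝ) (ξ : Fin n → ℝ) (y : EuclideanSpace ℂ (Fin (2 ^ n))) :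
    ‖toEuclideanLin (Mmat n a γ * Umat n ξ + Umat n ξ * Mmat n a γ) y‖ ≤
      (∑ j, ‖a j‖ * phaseFactor (ξ j)) * ‖y‖ := by
  induction n with
  | zero => simp [Mmat]
  | succ n ih =>
    set α := a (Fin.last n)
    set c := Complex.exp (Complex.I * ξ (Fin.last n))
    set M := Mmat n (fun j => a j.castSucc) fun j k => γ j.castSucc k.castSucc
    set U := Umat n fun j => ξ j.castSucc
    set V := Umat n fun j => γ j.castSucc (Fin.last n)
    have hblocks : Mmat (n + 1) a γ * Umat (n + 1) ξ + Umat (n + 1) ξ * Mmat (n + 1) a γ =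
        reindex (finTwoPowSuccEquiv n) (finTwoPowSuccEquiv n) (fromBlocks
          (M * U + U * M) ((1 + c) • (U * (α • V))) ((1 + c) • (U * (α • V)ᴴ))
          (c • (M * U + U * M))) := by
      have hC : Commute U (α • V)ᴴ := by
        rw [conjTranspose_smul]
        exact (Umat_commute_conjTranspose n _ _).smul_right _
      simp only [Mmat_succ, Umat_succ, ← coe_reindexAlgEquiv ℂ ℂ, ← map_mul, ← map_add]
      rw [fromBlocks_anticommutator c ((Umat_commute n _ _).smul_right α) hC]
    have hU : ∀ W x, ‖toEuclideanLin (U * W) x‖ = ‖toEuclideanLin W x‖ := fun W x => by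
      rw [toLpLin_mul_same, LinearMap.comp_apply, norm_toEuclideanLin_Umat]
    have hK : 0 ≤ ∑ j : Fin n, ‖a j.castSucc‖ * phaseFactor (ξ j.castSucc) :=
      Finset.sum_nonneg fun j _ => mul_nonneg (norm_nonneg _) (phaseFactor_nonneg _)
    rw [hblocks, Fin.sum_univ_castSucc]
    refine norm_toEuclideanLin_blocks_le hK (mul_nonneg (norm_nonneg _) (phaseFactor_nonneg _))
      (ih _ _ _) (fun x => ?_) (fun x => ?_) (fun x => ?_) y
    · rw [norm_toEuclideanLin_smul, hU, norm_toEuclideanLin_smul, norm_toEuclideanLin_Umat,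
        phaseFactor]
      exact le_of_eq (by ring)
    · rw [norm_toEuclideanLin_smul, hU, conjTranspose_smul, norm_toEuclideanLin_smul, norm_star,
        norm_toEuclideanLin_Umat_conjTranspose, phaseFactor]
      exact le_of_eq (by ring)
    · have hc : ‖c‖ = 1 := by simp [c, Complex.norm_exp]
      rw [norm_toEuclideanLin_smul, hc, one_mul]
      exact ih _ _ _ x

theorem mul_norm_sq_le_norm_toEuclideanLin_Mmat_sq (n : ℕ) (a : Fin n → ℂ)
    (γ : Fin n → Fin n → ℝ) (v : EuclideanSpace ℂ (Fin (2 ^ n))) :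
    (∑ j, ‖a j‖ ^ 2 - 1 / 2 * ∑ j, ∑ k,
        if j < k then (‖a j‖ ^ 2 + ‖a k‖ ^ 2) * phaseFactor (γ j k) else 0) * ‖v‖ ^ 2 ≤
      ‖toEuclideanLin (Mmat n a γ) v‖ ^ 2 := by
  induction n with
  | zero => simp [Mmat]
  | succ n ih =>
    set α := a (Fin.last n)
    set M := Mmat n (fun j => a j.castSucc) fun j k => γ j.castSucc k.castSucc
    set V := Umat n fun j => γ j.castSucc (Fin.last n)
    set x := upperHalf v
    set y := lowerHalf v
    set K := ∑ j : Fin n, ‖a j.castSucc‖ * phaseFactor (γ j.castSucc (Fin.last n))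
    have hK : 0 ≤ K :=
      Finset.sum_nonneg fun j _ => mul_nonneg (norm_nonneg _) (phaseFactor_nonneg _)
    have hcross : -(‖α‖ * K * (‖x‖ * ‖y‖)) ≤
        RCLike.re (inner ℂ x (toEuclideanLin (M * (α • V) + (α • V) * M) y)) := by
      rw [mul_smul_comm, smul_mul_assoc, ← smul_add, map_smul, LinearMap.smul_apply,
        inner_smul_right]
      refine le_trans ?_ (neg_le_of_abs_le (Complex.abs_re_le_norm _))
      rw [neg_le_neg_iff, norm_mul, mul_assoc]
      gcongr
      calc _ ≤ ‖x‖ * ‖toEuclideanLin (M * V + V * M) y‖ := norm_inner_le_norm (𝕜 := ℂ) _ _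
        _ ≤ ‖x‖ * (K * ‖y‖) := by
          gcongr
          exact norm_toEuclideanLin_Mmat_anticommutator_Umat_le n _ _ _ y
        _ = K * (‖x‖ * ‖y‖) := by ring
    have hamgm : ‖α‖ * K ≤ 1 / 2 * ∑ j : Fin n,
        (‖a j.castSucc‖ ^ 2 + ‖α‖ ^ 2) * phaseFactor (γ j.castSucc (Fin.last n)) := by
      rw [Finset.mul_sum, Finset.mul_sum]
      refine Finset.sum_le_sum fun j _ => ?_
      nlinarith [mul_nonneg (sq_nonneg (‖α‖ - ‖a j.castSucc‖))
        (phaseFactor_nonneg (γ j.castSucc (Fin.last n)))]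
    rw [Mmat_succ, norm_sq_toEuclideanLin_blocks_of_isHermitian (Mmat_isHermitian n _ _),
      conjTranspose_smul, norm_toEuclideanLin_smul, norm_star,
      norm_toEuclideanLin_Umat_conjTranspose, norm_toEuclideanLin_smul, norm_toEuclideanLin_Umat,
      Fin.sum_univ_castSucc, Fin.sum_sum_ite_lt_castSucc, norm_sq_eq_upperHalf_add_lowerHalf v]
    nlinarith [ih (fun j => a j.castSucc) (fun j k => γ j.castSucc k.castSucc) x,
      ih (fun j => a j.castSucc) (fun j k => γ j.castSucc k.castSucc) y,
      mul_nonneg (mul_nonneg (norm_nonneg α) hK) (sq_nonneg (‖x‖ - ‖y‖))]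

theorem Mmat_inf_sq_ge'_general (n : ℕ) (a : Fin n → ℂ) (γ : Fin n → Fin n → ℝ) :
    (1 - (if 2 ≤ n then (1 : ℝ) else 0) * (1 / 2) *
          ⨆ m : Fin n,
            ((∑ j : Fin n,
                if j < m then ‖1 + Complex.exp (Complex.I * (γ j m : ℂ))‖ else 0) +
              ∑ j : Fin n,
                if m < j then ‖1 + Complex.exp (Complex.I * (γ m j : ℂ))‖ else 0)) *
        (∑ j : Fin n, ‖a j‖ ^ 2) ≤
      sInf {r : ℝ | ∃ v : EuclideanSpace ℂ (Fin (2 ^ n)),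
        ‖v‖ = 1 ∧ r = ‖Matrix.toEuclideanLin (Mmat n a γ) v‖ ^ 2} := by
  set c : Fin n → Fin n → ℝ := fun j k => phaseFactor (γ j k)
  change (1 - _ * (1 / 2) * ⨆ m, rowSum c m) * _ ≤ _
  have hrows : (if 2 ≤ n then (1 : ℝ) else 0) * ⨆ m, rowSum c m = ⨆ m, rowSum c m := by
    split_ifs with hn
    · exact one_mul _
    · have : Subsingleton (Fin n) := Fin.subsingleton_iff_le_one.2 (by omega)
      simp only [rowSum_eq_zero, Real.iSup_const_zero, mul_zero]
  have hpairs := sum_sum_ite_lt_add_mul_le_iSup_rowSum_mul (fun j => sq_nonneg ‖a j‖) c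
  refine le_csInf ⟨_, EuclideanSpace.single 0 1, by simp, rfl⟩ ?_
  rintro r ⟨v, hv, rfl⟩
  calc _ = ∑ j, ‖a j‖ ^ 2 - 1 / 2 * (((if 2 ≤ n then (1 : ℝ) else 0) * ⨆ m, rowSum c m) *
          ∑ j, ‖a j‖ ^ 2) := by ring
    _ ≤ (∑ j, ‖a j‖ ^ 2 - 1 / 2 * ∑ j, ∑ k,
          if j < k then (‖a j‖ ^ 2 + ‖a k‖ ^ 2) * phaseFactor (γ j k) else 0) * ‖v‖ ^ 2 := by
      rw [hrows, hv]
      linarith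
    _ ≤ _ := mul_norm_sq_le_norm_toEuclideanLin_Mmat_sq n a γ v

/-- Lemma 2.2 (4): a lower bound on `inf_{‖v‖=1} ‖M_n((a_j),(γ_{j,k})) v‖²` in terms of the
maximum over `m` of the row sums `Σ_{j<m}|1+e^{iγ_{j,m}}| + Σ_{j>m}|1+e^{iγ_{m,j}}|`. -/
theorem Mmat_inf_sq_ge' (n : ℕ) (hn : 1 ≤ n) (a : Fin n → ℂ) (γ : Fin n → Fin n → ℝ) :
    (1 - (if 2 ≤ n then (1 : ℝ) else 0) * (1 / 2) *
          ⨆ m : Fin n,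
            ((∑ j : Fin n,
                if j < m then ‖1 + Complex.exp (Complex.I * (γ j m : ℂ))‖ else 0) +
              ∑ j : Fin n,
                if m < j then ‖1 + Complex.exp (Complex.I * (γ m j : ℂ))‖ else 0)) *
        (∑ j : Fin n, ‖a j‖ ^ 2) ≤
      sInf {r : ℝ | ∃ v : EuclideanSpace ℂ (Fin (2 ^ n)),
        ‖v‖ = 1 ∧ r = ‖Matrix.toEuclideanLin (Mmat n a γ) v‖ ^ 2} :=
  Mmat_inf_sq_ge'_general n a γ
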